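/- arXiv:2512.17381 — 8 statements merged into one kernel-verified Lean document; each statement's English description precedes it below -/
import Mathlib

section
/- Let C_m and C_M be real numbers with 0 < C_m ≤ C_M, and set θ = (1 + 1/C_M)^{C_m} − 1 (real exponentiation). Let (S_n)_{n≥0} be a sequence of real numbers satisfying S_0 ≥ 0 and S_n ≥ (1 + 1/C_M)·S_{n-1} + 1/(θ·C_M) for every n ≥ 1. Then S_{⌈C_m⌉} ≥ 1, where ⌈C_m⌉ is the ceiling of C_m. -/
/-! With `r = 1 + 1/C_M`, unrolling the recursion bounds `S n` below by the geometric sum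
`(1/(θ C_M)) (r^n - 1)/(r - 1) = (r^n - 1)/θ`, and `r^⌈C_m⌉ ≥ r^C_m = 1 + θ`. -/

open Finset

theorem mul_geom_sum_le_of_le_mul_add {r c : ℝ} {S : ℕ → ℝ} (hr : 0 ≤ r) (hS0 : 0 ≤ S 0)
    (hrec : ∀ n, r * S n + c ≤ S (n + 1)) (n : ℕ) : c * ∑ i ∈ range n, r ^ i ≤ S n := by
  induction n with
  | zero => simpa using hS0
  | succ n ih =>
    calc c * ∑ i ∈ range (n + 1), r ^ i = r * (c * ∑ i ∈ range n, r ^ i) + c := by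
          simp only [sum_range_succ', pow_succ, ← sum_mul, pow_zero]; ring
      _ ≤ r * S n + c := by gcongr
      _ ≤ S (n + 1) := hrec n

theorem div_le_of_le_mul_add {r c : ℝ} {S : ℕ → ℝ} (hr : 1 < r) (hS0 : 0 ≤ S 0)
    (hrec : ∀ n, r * S n + c ≤ S (n + 1)) (n : ℕ) : c * (r ^ n - 1) / (r - 1) ≤ S n := by
  rw [mul_div_assoc, ← geom_sum_eq hr.ne']
  exact mul_geom_sum_le_of_le_mul_add (by linarith) hS0 hrec n

/-- Core of Lemma 2: with `θ = (1 + 1/C_M)^{C_m} - 1` (real exponentiation),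
any sequence with `S 0 ≥ 0` and `S n ≥ (1 + 1/C_M) * S (n-1) + 1/(θ*C_M)`
reaches `1` after `⌈C_m⌉` steps. -/
theorem stmt_1 (Cm CM : ℝ) (hCm : 0 < Cm) (hle : Cm ≤ CM)
    (θ : ℝ) (hθ : θ = (1 + 1 / CM) ^ Cm - 1)
    (S : ℕ → ℝ) (hS0 : 0 ≤ S 0)
    (hrec : ∀ n : ℕ, 1 ≤ n → S n ≥ (1 + 1 / CM) * S (n - 1) + 1 / (θ * CM)) :
    S ⌈Cm⌉₊ ≥ 1 := by
  set r := 1 + 1 / CM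
  have hCM : 0 < CM := hCm.trans_le hle
  have hr : 1 < r := lt_add_of_pos_right 1 (by positivity)
  have hθpos : 0 < θ := by
    rw [hθ, sub_pos]
    exact Real.one_lt_rpow hr hCm
  have hbound := div_le_of_le_mul_add hr hS0 (fun n => hrec (n + 1) n.succ_pos) ⌈Cm⌉₊
  have hpow : r ^ Cm ≤ r ^ ⌈Cm⌉₊ := by
    rw [← Real.rpow_natCast]
    exact Real.rpow_le_rpow_of_exponent_le hr.le (Nat.le_ceil Cm)
  have hbound_eq : 1 / (θ * CM) * (r ^ ⌈Cm⌉₊ - 1) / (r - 1) = (r ^ ⌈Cm⌉₊ - 1) / θ := by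
    simp only [r]; field_simp; ring
  calc 1 ≤ (r ^ ⌈Cm⌉₊ - 1) / θ := (one_le_div hθpos).2 (by linarith)
    _ ≤ S ⌈Cm⌉₊ := hbound_eq ▸ hbound
end

section
/- Let R > 0 be a real number and define p : ℝ → ℝ by p(t) = e^{t/R}/(R·(e^{1/R} − 1)). Then ∫_0^1 p(t) dt = 1, and for every real T with 0 < T ≤ 1, ∫_0^T (R + t)·p(t) dt + T·∫_T^1 p(t) dt = (e^{1/R}/(e^{1/R} − 1))·T. -/
/-! The density integrates in closed form: `∫ₐᵇ e^{t/R} dt = R (e^{b/R} - e^{a/R})`, and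
`t ↦ R t e^{t/R}` is an antiderivative of `(R + t) e^{t/R}`. Substituting, the cost equals
`T (R e^{T/R} + R e^{1/R} - R e^{T/R}) / (R (e^{1/R} - 1))`: the `e^{T/R}` terms cancel, which
is why this density equalizes the competitive ratio over all horizons `T`. -/

open Real intervalIntegral

theorem integral_exp_div {c : ℝ} (hc : c ≠ 0) (a b : ℝ) :
    ∫ t in a..b, exp (t / c) = c * (exp (b / c) - exp (a / c)) := by
  rw [integral_comp_div exp hc, integral_exp, smul_eq_mul]

theorem hasDerivAt_mul_mul_exp_div {c : ℝ} (hc : c ≠ 0) (t : ℝ) :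
    HasDerivAt (fun t => c * t * exp (t / c)) ((c + t) * exp (t / c)) t := by
  refine (((hasDerivAt_id' t).const_mul c).mul ((hasDerivAt_id' t).div_const c).exp).congr_deriv ?_
  field_simp

theorem integral_add_mul_exp_div {c : ℝ} (hc : c ≠ 0) (T : ℝ) :
    ∫ t in (0:ℝ)..T, (c + t) * exp (t / c) = c * T * exp (T / c) := by
  have hcont : Continuous fun t : ℝ => (c + t) * exp (t / c) := by fun_prop
  rw [integral_eq_sub_of_hasDerivAt (fun t _ => hasDerivAt_mul_mul_exp_div hc t)
    (hcont.intervalIntegrable 0 T)]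
  simp

/-- Explicit computation in the proof of Lemma 4: for the density
`p(t) = e^{t/R}/(R·(e^{1/R} - 1))`, we have `∫_0^1 p = 1` and, for every
`T ∈ (0,1]`, `∫_0^T (R+t)·p(t) dt + T·∫_T^1 p(t) dt = (e^{1/R}/(e^{1/R}-1))·T`. -/
theorem stmt_3 (R : ℝ) (hR : 0 < R)
    (p : ℝ → ℝ) (hp : ∀ t, p t = Real.exp (t / R) / (R * (Real.exp (1 / R) - 1))) :
    (∫ t in (0:ℝ)..1, p t) = 1 ∧
    ∀ T : ℝ, 0 < T → T ≤ 1 →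
      (∫ t in (0:ℝ)..T, (R + t) * p t) + T * (∫ t in T..(1:ℝ), p t)
        = (Real.exp (1 / R) / (Real.exp (1 / R) - 1)) * T := by
  have hR0 : R ≠ 0 := hR.ne'
  have hE : exp (1 / R) - 1 ≠ 0 := sub_ne_zero.mpr (one_lt_exp_iff.mpr (by positivity)).ne'
  simp only [hp, integral_div, ← mul_div_assoc, integral_exp_div hR0,
    integral_add_mul_exp_div hR0]
  refine ⟨?_, fun T _ _ => ?_⟩
  · field_simp
    simp
  · field_simp
    ring
end

section
/- Let R ≥ 1 be a real number, let p : ℝ → ℝ be a nonnegative function that is integrable on [0,1] with ∫_0^1 p(t) dt = 1, and let c be a real number such that for every T with 0 < T ≤ 1, ∫_0^T (R + t)·p(t) dt + T·∫_T^1 p(t) dt ≤ c·T. Then c ≥ e^{1/R}/(e^{1/R} − 1). -/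
/-!
Write `F T = ∫₀ᵀ p` and `G T = ∫₀ᵀ F`. Integrating by parts, `∫₀ᵀ t p t = T F T - G T`, so the
constraint at horizon `T` reads `R G' T = R F T ≤ (c - 1) T + G T`. By Grönwall,
`G T + (c - 1)(T + R)` grows at most like `e^{T/R}`, whence
`G 1 + (c - 1)(1 + R) ≤ e^{1/R} (c - 1) R`. The constraint at `T = 1`, where `F 1 = 1`, gives
`G 1 ≥ R + 1 - c`, and the two combine to `c R ≤ e^{1/R} (c - 1) R`.
-/

open MeasureTheory Set Real

theorem intervalIntegral.integral_id_mul_eq_sub_integral_primitive {p : ℝ → ℝ} {a b : ℝ}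
    (hp : IntervalIntegrable p volume a b) :
    ∫ t in a..b, t * p t = b * (∫ t in a..b, p t) - ∫ s in a..b, ∫ t in a..s, p t := by
  have hF := hp.absolutelyContinuousOnInterval_intervalIntegral left_mem_uIcc
  have hid : AbsolutelyContinuousOnInterval (fun t : ℝ => t) a b :=
    LipschitzWith.id.lipschitzOnWith.absolutelyContinuousOnInterval
  have hderiv :
      ∫ t in a..b, t * p t = ∫ t in a..b, t * deriv (fun x => ∫ t in a..x, p t) t := by
    refine intervalIntegral.integral_congr_ae ?_
    filter_upwards [hp.ae_hasDerivAt_integral] with t ht htab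
    rw [(ht (uIoc_subset_uIcc htab) a left_mem_uIcc).deriv]
  simpa [hderiv] using hid.integral_mul_deriv_eq_deriv_mul hF

theorem intervalIntegral.hasDerivAt_integral_primitive {p : ℝ → ℝ} {a b T : ℝ}
    (hp : IntervalIntegrable p volume a b) (hT : T ∈ Ioo a b) :
    HasDerivAt (fun x => ∫ s in a..x, ∫ t in a..s, p t) (∫ t in a..T, p t) T := by
  have hF : ContinuousOn (fun s => ∫ t in a..s, p t) (Icc a b) := by
    simpa [uIcc_of_le (hT.1.trans hT.2).le] using
      intervalIntegral.continuousOn_primitive_interval' hp left_mem_uIcc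
  refine intervalIntegral.integral_hasDerivAt_right ?_
    (ContinuousOn.stronglyMeasurableAtFilter isOpen_Ioo (hF.mono Ioo_subset_Icc_self) T hT)
    (hF.continuousAt (Icc_mem_nhds hT.1 hT.2))
  exact (hF.mono (Icc_subset_Icc le_rfl hT.2.le)).intervalIntegrable_of_Icc hT.1.le

theorem le_exp_mul_of_hasDerivAt_le_mul {H H' : ℝ → ℝ} {a b r : ℝ} (hab : a ≤ b)
    (hH : ContinuousOn H (Icc a b)) (hderiv : ∀ x ∈ Ioo a b, HasDerivAt H (H' x) x)
    (hle : ∀ x ∈ Ioo a b, H' x ≤ r * H x) : H b ≤ exp (r * (b - a)) * H a := by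
  have hanti : AntitoneOn (fun x => exp (-r * x) * H x) (Icc a b) := by
    refine antitoneOn_of_hasDerivWithinAt_nonpos (convex_Icc a b)
      ((by fun_prop : Continuous fun x => exp (-r * x)).continuousOn.mul hH)
      (f' := fun x => exp (-r * x) * (H' x - r * H x)) ?_ ?_ <;>
      intro x hx <;> simp only [interior_Icc] at hx ⊢
    · have h := (((hasDerivAt_id' x).const_mul (-r)).exp.mul (hderiv x hx)).hasDerivWithinAt
        (s := Ioo a b)
      exact h.congr_deriv (by ring)
    · exact mul_nonpos_of_nonneg_of_nonpos (exp_pos _).le (by linarith [hle x hx])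
  calc H b = exp (r * b) * (exp (-r * b) * H b) := by
        rw [← mul_assoc, ← exp_add]; simp
    _ ≤ exp (r * b) * (exp (-r * a) * H a) :=
        mul_le_mul_of_nonneg_left (hanti ⟨le_rfl, hab⟩ ⟨hab, le_rfl⟩ hab) (exp_pos _).le
    _ = exp (r * (b - a)) * H a := by
        rw [← mul_assoc, ← exp_add]; ring_nf

theorem integral_primitive_add_le_of_mul_primitive_le {p : ℝ → ℝ} {b R k : ℝ} (hR : 0 < R)
    (hb : 0 ≤ b) (hp : IntervalIntegrable p volume 0 b)
    (h : ∀ T ∈ Ioo 0 b, R * (∫ t in 0..T, p t) ≤ k * T + ∫ s in 0..T, ∫ t in 0..s, p t) :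
    (∫ s in 0..b, ∫ t in 0..s, p t) + k * (b + R) ≤ exp (b / R) * (k * R) := by
  have hG : ContinuousOn (fun x => ∫ s in 0..x, ∫ t in 0..s, p t) (Icc 0 b) := by
    rw [← uIcc_of_le hb]
    exact intervalIntegral.continuousOn_primitive_interval'
      (intervalIntegral.continuousOn_primitive_interval' hp left_mem_uIcc).intervalIntegrable
      left_mem_uIcc
  have hbound := le_exp_mul_of_hasDerivAt_le_mul (r := 1 / R)
    (H := fun x => (∫ s in 0..x, ∫ t in 0..s, p t) + k * (x + R)) hb (hG.add (by fun_prop))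
    (fun T hT => (intervalIntegral.hasDerivAt_integral_primitive hp hT).add
      (((hasDerivAt_id' T).add_const R).const_mul k))
    (fun T hT => by
      rw [mul_one, one_div_mul_eq_div, le_div_iff₀ hR]
      linarith [h T hT])
  simpa [div_eq_inv_mul] using hbound

theorem integral_add_mul_add_mul_integral_eq {p : ℝ → ℝ} {a b T : ℝ} (R : ℝ)
    (haT : IntervalIntegrable p volume a T) (hTb : IntervalIntegrable p volume T b) :
    (∫ t in a..T, (R + t) * p t) + T * ∫ t in T..b, p t
      = R * (∫ t in a..T, p t) + T * (∫ t in a..b, p t) - ∫ s in a..T, ∫ t in a..s, p t := by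
  have hsplit :
      ∫ t in a..T, (R + t) * p t = R * (∫ t in a..T, p t) + ∫ t in a..T, t * p t := by
    simp only [add_mul]
    rw [intervalIntegral.integral_add (haT.const_mul R)
      (haT.continuousOn_mul (continuousOn_id' _)), intervalIntegral.integral_const_mul]
  rw [hsplit, intervalIntegral.integral_id_mul_eq_sub_integral_primitive haT,
    ← intervalIntegral.integral_add_adjacent_intervals haT hTb]
  ring

theorem stmt_4_general (R : ℝ) (hR : 1 ≤ R)
    (p : ℝ → ℝ)
    (hint : IntegrableOn p (Set.Icc 0 1))
    (hnorm : (∫ t in (0:ℝ)..1, p t) = 1)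
    (c : ℝ)
    (hc : ∀ T : ℝ, 0 < T → T ≤ 1 →
      (∫ t in (0:ℝ)..T, (R + t) * p t) + T * (∫ t in T..(1:ℝ), p t) ≤ c * T) :
    c ≥ Real.exp (1 / R) / (Real.exp (1 / R) - 1) := by
  have hR0 : 0 < R := zero_lt_one.trans_le hR
  have hp : IntervalIntegrable p volume 0 1 :=
    (intervalIntegrable_iff_integrableOn_Icc_of_le zero_le_one).2 hint
  have hprimitive : ∀ T ∈ Ioc (0:ℝ) 1,
      R * (∫ t in 0..T, p t) ≤ (c - 1) * T + ∫ s in 0..T, ∫ t in 0..s, p t := by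
    intro T hT
    have hT01 : T ∈ uIcc (0:ℝ) 1 := Icc_subset_uIcc (Ioc_subset_Icc_self hT)
    have h := hc T hT.1 hT.2
    rw [integral_add_mul_add_mul_integral_eq R (hp.mono_set (uIcc_subset_uIcc_left hT01))
      (hp.mono_set (uIcc_subset_uIcc_right hT01)), hnorm] at h
    linarith
  have hgronwall := integral_primitive_add_le_of_mul_primitive_le hR0 zero_le_one hp
    fun T hT => hprimitive T (Ioo_subset_Ioc_self hT)
  have hend := hprimitive 1 ⟨one_pos, le_rfl⟩
  rw [hnorm] at hend
  have hE : 1 < exp (1 / R) := one_lt_exp_iff.2 (by positivity)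
  rw [ge_iff_le, div_le_iff₀ (by linarith)]
  nlinarith

/-- Continuous-time LP underlying Lemma 4 (converse): any density `p` on `[0,1]`
satisfying the competitive-ratio constraints for all horizons `T ∈ (0,1]`
forces `c ≥ e^{1/R}/(e^{1/R} - 1)`. -/
theorem stmt_4 (R : ℝ) (hR : 1 ≤ R)
    (p : ℝ → ℝ) (hp : ∀ t, 0 ≤ p t)
    (hint : IntegrableOn p (Set.Icc 0 1))
    (hnorm : (∫ t in (0:ℝ)..1, p t) = 1)
    (c : ℝ)
    (hc : ∀ T : ℝ, 0 < T → T ≤ 1 →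
      (∫ t in (0:ℝ)..T, (R + t) * p t) + T * (∫ t in T..(1:ℝ), p t) ≤ c * T) :
    c ≥ Real.exp (1 / R) / (Real.exp (1 / R) - 1) :=
  stmt_4_general R hR p hint hnorm c hc
end

section
/- Let C > 0 and θ_s ≥ θ_f > 0 be real numbers, let N ∈ ℕ, and let b : {0,…,N−1} → {slow, fast} be any sequence of step types containing exactly N_s slow steps and N_f fast steps (so N_s + N_f = N). Let (S_k)_{0≤k≤N} be real numbers with S_0 ≥ 0 and, for each k, S_{k+1} ≥ (1 + 1/C)·S_k + 1/(θ_s·C) if step k is slow, and S_{k+1} ≥ (1 + 1/C)·S_k + 1/(θ_f·C) if step k is fast. Then S_N ≥ ((1 + 1/C)^{N_s} − 1)/θ_s · (1 + 1/C)^{N_f} + ((1 + 1/C)^{N_f} − 1)/θ_f. -/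
/-!
Write `q = 1 + r` with `r = 1/C`. The bound is the value reached when all slow steps come first.
Its closed form `F(a, c) = (q^a - 1)/θs * q^c + (q^c - 1)/θf`, in the numbers `a`, `c` of slow and
fast steps taken so far, satisfies the fast recursion with equality and the slow one with slack
`r (q^c - 1) (1/θf - 1/θs) ≥ 0`; so `F` lower-bounds `S` by induction on the number of steps.
-/

open Nat

section ClearingBound

variable (r θs θf : ℝ)

noncomputable def clearingBound (a c : ℕ) : ℝ :=
  ((1 + r) ^ a - 1) / θs * (1 + r) ^ c + ((1 + r) ^ c - 1) / θf

@[simp]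
lemma clearingBound_zero_zero : clearingBound r θs θf 0 0 = 0 := by
  simp [clearingBound]

lemma clearingBound_succ_right (a c : ℕ) :
    clearingBound r θs θf a (c + 1) = (1 + r) * clearingBound r θs θf a c + r / θf := by
  simp only [clearingBound, pow_succ]
  ring

variable {r θs θf}

lemma clearingBound_succ_left_le (hr : 0 ≤ r) (hθf : 0 < θf) (hθ : θf ≤ θs) (a c : ℕ) :
    clearingBound r θs θf (a + 1) c ≤ (1 + r) * clearingBound r θs θf a c + r / θs := by
  have hslack : (1 + r) * clearingBound r θs θf a c + r / θs - clearingBound r θs θf (a + 1) c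
      = r * ((1 + r) ^ c - 1) * (1 / θf - 1 / θs) := by
    simp only [clearingBound, pow_succ]
    ring
  have hpow : 1 ≤ (1 + r) ^ c := one_le_pow₀ (by linarith)
  have hinv : 1 / θs ≤ 1 / θf := one_div_le_one_div_of_le hθf hθ
  have : 0 ≤ r * ((1 + r) ^ c - 1) * (1 / θf - 1 / θs) := by
    apply mul_nonneg (mul_nonneg hr _) <;> linarith
  linarith

lemma clearingBound_count_le (hr : 0 ≤ r) (hθf : 0 < θf) (hθ : θf ≤ θs)
    (N : ℕ) (b : ℕ → Bool) (S : ℕ → ℝ) (hS0 : 0 ≤ S 0)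
    (hstep : ∀ k < N, S (k + 1) ≥ (1 + r) * S k + r / (if b k then θs else θf)) :
    ∀ n ≤ N, clearingBound r θs θf (count (b · = true) n) (count (b · = false) n) ≤ S n := by
  intro n
  induction n with
  | zero => simpa using hS0
  | succ k ih =>
    intro hk
    have hprev : (1 + r) * clearingBound r θs θf (count (b · = true) k) (count (b · = false) k)
        ≤ (1 + r) * S k := mul_le_mul_of_nonneg_left (ih (by omega)) (by linarith)
    have hSk := hstep k hk
    rw [count_succ, count_succ]
    cases hb : b k
    · simp only [hb, Bool.false_eq_true, ↓reduceIte, add_zero, clearingBound_succ_right] at hSk ⊢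
      linarith
    · simp only [hb, Bool.true_eq_false, ↓reduceIte, add_zero] at hSk ⊢
      linarith [clearingBound_succ_left_le hr hθf hθ (count (b · = true) k) (count (b · = false) k)]

end ClearingBound

/-- Lemma 5: lower bound on the cumulative clearing probability after any
interleaving of `Ns` slow steps and `Nf` fast steps.  Here `b k = true`
means step `k` is a slow step, and `b k = false` means it is a fast step. -/
theorem stmt_5 (C θs θf : ℝ) (hC : 0 < C) (hθf : 0 < θf) (hθ : θf ≤ θs)
    (N Ns Nf : ℕ) (b : ℕ → Bool)
    (hNs : Ns = ((Finset.range N).filter (fun k => b k = true)).card)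
    (hNf : Nf = ((Finset.range N).filter (fun k => b k = false)).card)
    (S : ℕ → ℝ) (hS0 : 0 ≤ S 0)
    (hstep : ∀ k < N,
      S (k + 1) ≥ (1 + 1 / C) * S k + 1 / ((if b k then θs else θf) * C)) :
    S N ≥ ((1 + 1 / C) ^ Ns - 1) / θs * (1 + 1 / C) ^ Nf
      + ((1 + 1 / C) ^ Nf - 1) / θf := by
  have hstep_div : ∀ k < N, S (k + 1) ≥ (1 + 1 / C) * S k + 1 / C / (if b k then θs else θf) := by
    intro k hk
    rw [div_div, mul_comm C]
    exact hstep k hk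
  have hbound := clearingBound_count_le (by positivity) hθf hθ N b S hS0 hstep_div N le_rfl
  rw [count_eq_card_filter_range, count_eq_card_filter_range, ← hNs, ← hNf] at hbound
  exact hbound
end

section
/- For all real numbers x and λ with 0 < x ≤ 1 and 0 < λ ≤ 1, it holds that λ·(1 − e^{−x/λ}) ≥ 1 − e^{−x·λ}; equivalently, 1/(1 − e^{−x·λ}) ≥ (1/λ) · 1/(1 − e^{−x/λ}). -/
/-!
Write `F t = λ (1 - e^{-t/λ}) - (1 - e^{-tλ})`, so that `F 0 = 0`. Its derivative
`F' t = e^{-tλ} (e^{t(λ - 1/λ)} - λ)` changes sign at most once, from `+` to `-`, because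
`λ ≤ 1/λ`; hence `F` is at least `min (F 0) (F 1)` on `[0, 1]`. The endpoint inequality
`F 1 ≥ 0` says `λ e^{-1/λ} ≤ e^{-λ} - 1 + λ`; taking logarithms, it is `ψ λ ≥ ψ 1 = 0` for
the function `ψ` below, which is antitone on `(0, 1]` because `e^s ≤ 1 + s + s²` there.
-/

open Real Set

lemma exp_le_one_add_add_sq {t : ℝ} (h0 : 0 ≤ t) (h1 : t ≤ 1) : exp t ≤ 1 + t + t ^ 2 := by
  have h := abs_exp_sub_one_sub_id_le (x := t) (by rwa [abs_of_nonneg h0])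
  linarith [(abs_le.1 h).2]

lemma exp_neg_sub_one_add_pos {t : ℝ} (ht : t ≠ 0) : 0 < exp (-t) - 1 + t := by
  linarith [add_one_lt_exp (neg_ne_zero.2 ht)]

lemma min_le_of_hasDerivAt_of_nonneg_imp {f f' : ℝ → ℝ} {a b x : ℝ} (hax : a ≤ x) (hxb : x ≤ b)
    (hf : ∀ t ∈ Icc a b, HasDerivAt f (f' t) t)
    (hsign : ∀ s ∈ Icc a b, ∀ t ∈ Icc a b, s ≤ t → 0 ≤ f' t → 0 ≤ f' s) :
    min (f a) (f b) ≤ f x := by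
  have hcont : ContinuousOn f (Icc a b) := fun t ht => (hf t ht).continuousAt.continuousWithinAt
  have hx : x ∈ Icc a b := ⟨hax, hxb⟩
  rcases le_or_gt 0 (f' x) with hfx | hfx
  · have hmono : MonotoneOn f (Icc a x) := by
      refine monotoneOn_of_hasDerivWithinAt_nonneg (f' := f') (convex_Icc a x)
        (hcont.mono (Icc_subset_Icc_right hxb)) (fun t ht => ?_) (fun t ht => ?_) <;>
        rw [interior_Icc] at ht
      · exact (hf t ⟨ht.1.le, ht.2.le.trans hxb⟩).hasDerivWithinAt
      · exact hsign t ⟨ht.1.le, ht.2.le.trans hxb⟩ x hx ht.2.le hfx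
    exact min_le_of_left_le (hmono (left_mem_Icc.2 hax) (right_mem_Icc.2 hax) hax)
  · have hanti : AntitoneOn f (Icc x b) := by
      refine antitoneOn_of_hasDerivWithinAt_nonpos (f' := f') (convex_Icc x b)
        (hcont.mono (Icc_subset_Icc_left hax)) (fun t ht => ?_) (fun t ht => ?_) <;>
        rw [interior_Icc] at ht
      · exact (hf t ⟨hax.trans ht.1.le, ht.2.le⟩).hasDerivWithinAt
      · by_contra! hft
        exact hfx.not_ge (hsign x hx t ⟨hax.trans ht.1.le, ht.2.le⟩ ht.1.le hft.le)
    exact min_le_of_right_le (hanti (left_mem_Icc.2 hxb) (right_mem_Icc.2 hxb) hxb)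

/-- `ψ s = log ((e^{-s} - 1 + s) e^{1/s} / s)`. -/
noncomputable def psi (s : ℝ) : ℝ := log (exp (-s) - 1 + s) - log s + s⁻¹

lemma psi_one : psi 1 = 0 := by
  simp [psi]

lemma hasDerivAt_psi {s : ℝ} (hs : 0 < s) :
    HasDerivAt psi ((1 - exp (-s) * (1 + s + s ^ 2)) / (s ^ 2 * (exp (-s) - 1 + s))) s := by
  have hg := exp_neg_sub_one_add_pos hs.ne'
  have hinner : HasDerivAt (fun s => exp (-s) - 1 + s) (-exp (-s) + 1) s :=
    ((((hasDerivAt_neg s).exp).sub_const 1).add (hasDerivAt_id' s)).congr_deriv (by ring)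
  refine (((hinner.log hg.ne').sub (hasDerivAt_log hs.ne')).add
    (hasDerivAt_inv hs.ne')).congr_deriv ?_
  field_simp
  ring

lemma psi_antitoneOn : AntitoneOn psi (Ioc 0 1) := by
  refine antitoneOn_of_hasDerivWithinAt_nonpos (f' := fun s =>
    (1 - exp (-s) * (1 + s + s ^ 2)) / (s ^ 2 * (exp (-s) - 1 + s))) (convex_Ioc 0 1)
    (fun s hs => (hasDerivAt_psi hs.1).continuousAt.continuousWithinAt)
    (fun s hs => ?_) (fun s hs => ?_) <;> rw [interior_Ioc] at hs
  · exact (hasDerivAt_psi hs.1).hasDerivWithinAt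
  · have hg := exp_neg_sub_one_add_pos hs.1.ne'
    have hnum : 1 ≤ exp (-s) * (1 + s + s ^ 2) :=
      calc 1 = exp (-s) * exp s := by rw [← exp_add, neg_add_cancel, exp_zero]
        _ ≤ exp (-s) * (1 + s + s ^ 2) :=
          mul_le_mul_of_nonneg_left (exp_le_one_add_add_sq hs.1.le hs.2.le) (exp_pos _).le
    exact div_nonpos_of_nonpos_of_nonneg (by linarith) (by positivity)

lemma mul_exp_neg_inv_le {s : ℝ} (h0 : 0 < s) (h1 : s ≤ 1) :
    s * exp (-s⁻¹) ≤ exp (-s) - 1 + s := by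
  have h := psi_antitoneOn ⟨h0, h1⟩ ⟨one_pos, le_rfl⟩ h1
  rw [psi_one, psi] at h
  rw [← log_le_log_iff (by positivity) (exp_neg_sub_one_add_pos h0.ne'),
    log_mul h0.ne' (exp_pos _).ne', log_exp]
  linarith

lemma hasDerivAt_mul_one_sub_exp_neg_div_sub {lam : ℝ} (hl : lam ≠ 0) (t : ℝ) :
    HasDerivAt (fun t => lam * (1 - exp (-(t / lam))) - (1 - exp (-(t * lam))))
      (exp (-(t * lam)) * (exp (t * (lam - lam⁻¹)) - lam)) t := by
  have hdiv : HasDerivAt (fun t => -(t / lam)) (-(1 / lam)) t :=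
    ((hasDerivAt_id' t).div_const lam).neg
  have hmul : HasDerivAt (fun t => -(t * lam)) (-lam) t := by
    simpa [Pi.neg_def] using ((hasDerivAt_id' t).mul_const lam).neg
  refine (((hdiv.exp.const_sub 1).const_mul lam).sub (hmul.exp.const_sub 1)).congr_deriv ?_
  rw [mul_sub, ← exp_add]
  field_simp
  ring_nf

theorem one_sub_exp_neg_mul_le_mul_one_sub_exp_neg_div {x lam : ℝ} (hx0 : 0 ≤ x) (hx1 : x ≤ 1)
    (hl0 : 0 < lam) (hl1 : lam ≤ 1) :
    1 - exp (-(x * lam)) ≤ lam * (1 - exp (-(x / lam))) := by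
  set F := fun t => lam * (1 - exp (-(t / lam))) - (1 - exp (-(t * lam)))
  have hF0 : F 0 = 0 := by simp [F]
  have hF1 : 0 ≤ F 1 := by
    have := mul_exp_neg_inv_le hl0 hl1
    simp only [F, one_div, one_mul, mul_sub, mul_one]
    linarith
  have hslope : lam - lam⁻¹ ≤ 0 := sub_nonpos.2 (hl1.trans ((one_le_inv₀ hl0).2 hl1))
  have hmin := min_le_of_hasDerivAt_of_nonneg_imp hx0 hx1
    (fun t _ => hasDerivAt_mul_one_sub_exp_neg_div_sub hl0.ne' t) fun s _ t _ hst hft => by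
      rw [mul_nonneg_iff_of_pos_left (exp_pos _), sub_nonneg] at hft ⊢
      exact hft.trans (exp_le_exp.2 (mul_le_mul_of_nonpos_right hst hslope))
  have hFx : 0 ≤ F x := (le_min hF0.ge hF1).trans hmin
  simpa [F] using hFx

/-- Analytic inequality of Bamas–Maggiori–Svensson used in Lemma 6 and
Theorem 3: for `0 < x ≤ 1` and `0 < λ ≤ 1`,
`λ·(1 - e^{-x/λ}) ≥ 1 - e^{-x·λ}`, equivalently
`1/(1 - e^{-x·λ}) ≥ (1/λ)·1/(1 - e^{-x/λ})`. -/
theorem stmt_7 (x lam : ℝ) (hx0 : 0 < x) (hx1 : x ≤ 1)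
    (hl0 : 0 < lam) (hl1 : lam ≤ 1) :
    lam * (1 - Real.exp (-(x / lam))) ≥ 1 - Real.exp (-(x * lam)) ∧
    1 / (1 - Real.exp (-(x * lam)))
      ≥ (1 / lam) * (1 / (1 - Real.exp (-(x / lam)))) := by
  have hmain := one_sub_exp_neg_mul_le_mul_one_sub_exp_neg_div hx0.le hx1 hl0 hl1
  have hpos : 0 < 1 - exp (-(x * lam)) := sub_pos.2 (exp_lt_one_iff.2 (by nlinarith))
  refine ⟨hmain, ?_⟩
  rw [one_div_mul_one_div]
  exact one_div_le_one_div_of_le hpos hmain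
end

section
/- For all real numbers x and λ with 0 < x < 1 and 0 < λ ≤ 1, it holds that 1/(e^{x·λ} − 1) ≥ (((1 − λ)/λ)·e^{x/λ} + 1)/(e^{x/λ} − 1). -/
/-!
Substituting `u = 1/λ ≥ 1` and clearing denominators, the inequality becomes
`f x ≥ 0` for `f y = (1 - e^{-y u}) - u (1 - e^{-y/u})`. Since
`f' y = u e^{-y u} - e^{-y/u}` is nonnegative exactly when `y (u - 1/u) ≤ log u`,
`f` increases and then decreases, so on `[0, 1]` it is bounded below by
`min (f 0) (f 1) = min 0 (f 1)`. The endpoint inequality `f 1 ≥ 0`, an equality at `u = 1`,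
is checked numerically from Taylor bounds for `exp`, separately for `u ≤ 2` and `u ≥ 2`.
-/

open Real Set

theorem min_le_of_deriv_nonneg_of_deriv_nonpos {f : ℝ → ℝ} {a b c x : ℝ}
    (hcont : ContinuousOn f (Icc a b)) (hdiff : DifferentiableOn ℝ f (Ioo a b))
    (hinc : ∀ y ∈ Ioo a b, y < c → 0 ≤ deriv f y) (hdec : ∀ y ∈ Ioo a b, c < y → deriv f y ≤ 0)
    (hx : x ∈ Icc a b) : min (f a) (f b) ≤ f x := by
  obtain ⟨hax, hxb⟩ := hx
  rcases le_or_gt x c with hxc | hcx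
  · have hmono : MonotoneOn f (Icc a x) := by
      refine monotoneOn_of_deriv_nonneg (convex_Icc a x) (hcont.mono (Icc_subset_Icc_right hxb))
        ?_ fun y hy ↦ ?_ <;> rw [interior_Icc] at *
      · exact hdiff.mono (Ioo_subset_Ioo_right hxb)
      · exact hinc y ⟨hy.1, hy.2.trans_le hxb⟩ (hy.2.trans_le hxc)
    exact min_le_of_left_le (hmono (left_mem_Icc.2 hax) (right_mem_Icc.2 hax) hax)
  · have hanti : AntitoneOn f (Icc x b) := by
      refine antitoneOn_of_deriv_nonpos (convex_Icc x b) (hcont.mono (Icc_subset_Icc_left hax))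
        ?_ fun y hy ↦ ?_ <;> rw [interior_Icc] at *
      · exact hdiff.mono (Ioo_subset_Ioo_left hax)
      · exact hdec y ⟨hax.trans_lt hy.1, hy.2⟩ (hcx.trans hy.1)
    exact min_le_of_right_le (hanti (left_mem_Icc.2 hxb) (right_mem_Icc.2 hxb) hxb)

namespace Real

lemma abs_exp_neg_sub_taylor_le {t : ℝ} (h0 : 0 ≤ t) (h1 : t ≤ 1) :
    |exp (-t) - (1 - t + t ^ 2 / 2 - t ^ 3 / 6)| ≤ 5 * t ^ 4 / 96 := by
  have h := exp_bound (x := -t) (by rwa [abs_neg, abs_of_nonneg h0]) (n := 4) (by norm_num)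
  norm_num [Finset.sum_range_succ, Nat.factorial, abs_of_nonneg h0] at h
  convert h using 2 <;> ring

lemma cubic_le_exp_of_nonneg {t : ℝ} (h0 : 0 ≤ t) : 1 + t + t ^ 2 / 2 + t ^ 3 / 6 ≤ exp t := by
  have h := sum_le_exp_of_nonneg h0 4
  norm_num [Finset.sum_range_succ, Nat.factorial] at h
  linarith

lemma mul_one_sub_exp_neg_inv_le_of_le_two {u : ℝ} (hu1 : 1 ≤ u) (hu2 : u ≤ 2) :
    u * (1 - exp (-u⁻¹)) ≤ 1 - exp (-u) := by
  obtain ⟨v, rfl⟩ : ∃ v, u = 1 + v := ⟨u - 1, by ring⟩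
  have hv0 : 0 ≤ v := by linarith
  have hv1 : v ≤ 1 := by linarith
  have hpoly : 2.7182818286 * v + (1 - v + v ^ 2 / 2 - v ^ 3 / 6 + 5 * v ^ 4 / 96)
      ≤ (1 + v) * (1 + v / (1 + v) + (v / (1 + v)) ^ 2 / 2 + (v / (1 + v)) ^ 3 / 6) := by
    field_simp
    nlinarith [mul_nonneg hv0 (sub_nonneg.2 (pow_le_one₀ hv0 hv1 (n := 3))),
      mul_nonneg hv0 (sub_nonneg.2 (pow_le_one₀ hv0 hv1 (n := 5))), pow_nonneg hv0 2,
      pow_nonneg hv0 3, pow_nonneg hv0 5]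
  -- the claim multiplied by `e`
  have hkey : exp 1 * v + exp (-v) ≤ (1 + v) * exp (v / (1 + v)) :=
    calc exp 1 * v + exp (-v)
        ≤ 2.7182818286 * v + (1 - v + v ^ 2 / 2 - v ^ 3 / 6 + 5 * v ^ 4 / 96) := by
          gcongr
          · exact exp_one_lt_d9.le
          · linarith [(abs_le.1 (abs_exp_neg_sub_taylor_le hv0 hv1)).2]
      _ ≤ (1 + v) * (1 + v / (1 + v) + (v / (1 + v)) ^ 2 / 2 + (v / (1 + v)) ^ 3 / 6) := hpoly
      _ ≤ (1 + v) * exp (v / (1 + v)) := by gcongr; exact cubic_le_exp_of_nonneg (by positivity)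
  have hA : exp (-(1 + v)⁻¹) = exp (v / (1 + v)) / exp 1 := by
    rw [← exp_sub]; congr 1; field_simp; ring
  have hB : exp (-(1 + v)) = exp (-v) / exp 1 := by
    rw [← exp_sub]; ring_nf
  rw [hA, hB]
  field_simp
  linarith

lemma mul_one_sub_exp_neg_inv_le_of_two_le {u : ℝ} (hu : 2 ≤ u) :
    u * (1 - exp (-u⁻¹)) ≤ 1 - exp (-u) := by
  have hu0 : 0 < u := by linarith
  have hleft : u * (1 - exp (-u⁻¹)) ≤ 1 - 1 / (2 * u) + 1 / (6 * u ^ 2) + 5 / (96 * u ^ 3) :=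
    calc u * (1 - exp (-u⁻¹))
        ≤ u * (u⁻¹ - u⁻¹ ^ 2 / 2 + u⁻¹ ^ 3 / 6 + 5 * u⁻¹ ^ 4 / 96) := by
          have hs0 : 0 ≤ u⁻¹ := by positivity
          have hs1 : u⁻¹ ≤ 1 := inv_le_one_of_one_le₀ (by linarith)
          gcongr
          linarith [(abs_le.1 (abs_exp_neg_sub_taylor_le hs0 hs1)).1]
      _ = 1 - 1 / (2 * u) + 1 / (6 * u ^ 2) + 5 / (96 * u ^ 3) := by field_simp
  have hright : exp (-u) ≤ 1 / (2 * u) - 1 / (6 * u ^ 2) - 5 / (96 * u ^ 3) :=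
    calc exp (-u) = (exp u)⁻¹ := exp_neg u
      _ ≤ (1 + u + u ^ 2 / 2 + u ^ 3 / 6)⁻¹ :=
          inv_anti₀ (by positivity) (cubic_le_exp_of_nonneg hu0.le)
      _ ≤ 1 / (2 * u) - 1 / (6 * u ^ 2) - 5 / (96 * u ^ 3) := by
          rw [inv_le_iff_one_le_mul₀ (by positivity)]
          field_simp
          nlinarith [pow_nonneg (sub_nonneg.2 hu) 2, pow_nonneg (sub_nonneg.2 hu) 3,
            pow_nonneg (sub_nonneg.2 hu) 4, pow_nonneg (sub_nonneg.2 hu) 5]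
  linarith

lemma mul_one_sub_exp_neg_inv_le {u : ℝ} (hu : 1 ≤ u) :
    u * (1 - exp (-u⁻¹)) ≤ 1 - exp (-u) := by
  rcases le_total u 2 with hu2 | hu2
  · exact mul_one_sub_exp_neg_inv_le_of_le_two hu hu2
  · exact mul_one_sub_exp_neg_inv_le_of_two_le hu2

lemma nonneg_mul_exp_neg_mul_sub_exp_neg_div_iff {u y : ℝ} (hu : 0 < u) :
    0 ≤ u * exp (-(y * u)) - exp (-(y / u)) ↔ y * (u - u⁻¹) ≤ log u := by
  rw [sub_nonneg, ← exp_log hu, ← exp_add, exp_le_exp, exp_log hu]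
  constructor <;> intro h <;> linarith [div_eq_mul_inv y u]

lemma hasDerivAt_one_sub_exp_neg_mul_sub_mul_one_sub_exp_neg_div {u : ℝ} (hu : 0 < u) (y : ℝ) :
    HasDerivAt (fun y ↦ 1 - exp (-(y * u)) - u * (1 - exp (-(y / u))))
      (u * exp (-(y * u)) - exp (-(y / u))) y := by
  have h := ((((hasDerivAt_id' y).mul_const u).neg.exp).const_sub 1).sub
    ((((hasDerivAt_id' y).div_const u).neg.exp.const_sub 1).const_mul u)
  exact h.congr_deriv (by simp only [Pi.neg_apply]; field_simp)

lemma mul_one_sub_exp_neg_div_le {u x : ℝ} (hu : 1 ≤ u) (hx0 : 0 ≤ x) (hx1 : x ≤ 1) :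
    u * (1 - exp (-(x / u))) ≤ 1 - exp (-(x * u)) := by
  rcases hu.eq_or_lt with rfl | hu
  · simp
  have hu0 : 0 < u := one_pos.trans hu
  have hgap : 0 < u - u⁻¹ := sub_pos.2 ((inv_lt_one_of_one_lt₀ hu).trans hu)
  set f : ℝ → ℝ := fun y ↦ 1 - exp (-(y * u)) - u * (1 - exp (-(y / u)))
  have hf' := hasDerivAt_one_sub_exp_neg_mul_sub_mul_one_sub_exp_neg_div hu0
  have hdiff : Differentiable ℝ f := fun y ↦ (hf' y).differentiableAt
  have hmin := min_le_of_deriv_nonneg_of_deriv_nonpos (c := log u / (u - u⁻¹))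
    hdiff.continuous.continuousOn hdiff.differentiableOn
    (fun y _ hy ↦ by
      rw [(hf' y).deriv, nonneg_mul_exp_neg_mul_sub_exp_neg_div_iff hu0]
      exact ((lt_div_iff₀ hgap).1 hy).le)
    (fun y _ hy ↦ by
      rw [(hf' y).deriv]
      refine le_of_lt (not_le.1 fun h ↦ ?_)
      rw [nonneg_mul_exp_neg_mul_sub_exp_neg_div_iff hu0] at h
      linarith [(div_lt_iff₀ hgap).1 hy])
    ⟨hx0, hx1⟩
  have hf0 : f 0 = 0 := by simp [f]
  have hf1 : 0 ≤ f 1 := by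
    simpa [f, one_div] using mul_one_sub_exp_neg_inv_le hu.le
  have : 0 ≤ f x := by rw [hf0] at hmin; exact (le_min le_rfl hf1).trans hmin
  simp only [f] at this
  linarith

end Real

/-- Analytic inequality of Bamas–Maggiori–Svensson used in the proof of
Lemma 6: for `0 < x < 1` and `0 < λ ≤ 1`,
`1/(e^{x·λ} - 1) ≥ (((1-λ)/λ)·e^{x/λ} + 1)/(e^{x/λ} - 1)`. -/
theorem stmt_8 (x lam : ℝ) (hx0 : 0 < x) (hx1 : x < 1)
    (hl0 : 0 < lam) (hl1 : lam ≤ 1) :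
    1 / (Real.exp (x * lam) - 1)
      ≥ (((1 - lam) / lam) * Real.exp (x / lam) + 1) / (Real.exp (x / lam) - 1) := by
  have hkey := mul_one_sub_exp_neg_div_le (one_le_one_div hl0 hl1) hx0.le hx1.le
  rw [div_div_eq_mul_div, div_one, mul_one_div, exp_neg, exp_neg] at hkey
  have hA : 1 < exp (x * lam) := one_lt_exp_iff.2 (by positivity)
  have hB : 1 < exp (x / lam) := one_lt_exp_iff.2 (by positivity)
  rw [ge_iff_le, div_le_div_iff₀ (by linarith) (by linarith)]
  field_simp at hkey ⊢
  linear_combination hkey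
end

section
/- Let R ≥ 1 and 0 < λ ≤ 1 be real numbers. Let p : ℝ → ℝ be a nonnegative function integrable on [0,1] with ∫_0^1 p(t) dt = 1 and ∫_0^1 (R + t)·p(t) dt ≤ (λ·e^{λ/R})/(e^{λ/R} − 1), and let c be a real number such that for every T with 0 < T ≤ 1, ∫_0^T (R + t)·p(t) dt + T·∫_T^1 p(t) dt ≤ c·T. Then c ≥ e^{λ/R}/(e^{λ/R} − 1). -/
/-!
Write `F` for the distribution function of `p` and `G T = ∫₀ᵀ F`. Integrating by parts,
`∫₀ᵀ t p(t) dt = T F(T) - G(T)`, so the robustness constraint reads `R G' - G ≤ (c - 1) T` on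
`(0, 1]`. Comparing `G` with `(c - 1) (R (e^{T/R} - 1) - T)`, which solves the corresponding
equation with the same value `0` at `T = 0`, gives `G(λ) ≤ (c - 1) (R (e^{λ/R} - 1) - λ)`.
Consistency says `G(1) ≥ R + 1 - λ e^{λ/R} / (e^{λ/R} - 1)`, and `G(1) ≤ G(λ) + 1 - λ` because
`F ≤ 1`. Together, `K / (e^{λ/R} - 1) ≤ (c - 1) K` with `K = R (e^{λ/R} - 1) - λ`, which is
positive since `e^x > 1 + x`.
-/

open MeasureTheory Set Real

theorem integral_primitive_eq_integral_sub_mul {f : ℝ → ℝ} {a b : ℝ}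
    (hf : IntervalIntegrable f volume a b) :
    ∫ s in a..b, (∫ t in a..s, f t) = ∫ t in a..b, (b - t) * f t := by
  have hF := hf.absolutelyContinuousOnInterval_intervalIntegral (left_mem_uIcc (b := b))
  have hu : AbsolutelyContinuousOnInterval (fun t : ℝ ↦ b - t) a b :=
    ContDiffOn.absolutelyContinuousOnInterval (by fun_prop)
  have hderiv : ∫ t in a..b, (b - t) * deriv (fun x ↦ ∫ t in a..x, f t) t
      = ∫ t in a..b, (b - t) * f t := by
    refine intervalIntegral.integral_congr_ae ?_
    filter_upwards [hf.ae_hasDerivAt_integral] with t ht hmem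
    rw [(ht (uIoc_subset_uIcc hmem) a left_mem_uIcc).deriv]
  rw [← hderiv, hu.integral_mul_deriv_eq_deriv_mul hF]
  simp

theorem antitoneOn_exp_neg_mul_of_hasDerivAt_le {h h' : ℝ → ℝ} {k a b : ℝ}
    (hc : ContinuousOn h (Icc a b)) (hd : ∀ x ∈ Ioo a b, HasDerivAt h (h' x) x)
    (hle : ∀ x ∈ Ioo a b, h' x ≤ k * h x) :
    AntitoneOn (fun x ↦ exp (-(k * x)) * h x) (Icc a b) := by
  refine antitoneOn_of_hasDerivWithinAt_nonpos (convex_Icc a b)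
    (f' := fun x ↦ exp (-(k * x)) * (h' x - k * h x)) ?_ (fun x hx ↦ ?_) (fun x hx ↦ ?_)
  · exact (continuous_exp.comp_continuousOn (by fun_prop)).mul hc
  · rw [interior_Icc] at hx ⊢
    have hlin : HasDerivAt (fun y ↦ -(k * y)) (-k) x := by
      simpa using ((hasDerivAt_id' x).const_mul k).fun_neg
    exact ((hlin.exp.fun_mul (hd x hx)).congr_deriv (by ring)).hasDerivWithinAt
  · rw [interior_Icc] at hx
    exact mul_nonpos_of_nonneg_of_nonpos (exp_pos _).le (by linarith [hle x hx])

namespace ClearingTimeLP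

noncomputable def cdf (p : ℝ → ℝ) (T : ℝ) : ℝ := ∫ t in (0:ℝ)..T, p t

noncomputable def integratedCdf (p : ℝ → ℝ) (T : ℝ) : ℝ := ∫ s in (0:ℝ)..T, cdf p s

variable {p : ℝ → ℝ}

theorem intervalIntegrable_of_mem_Icc (hint : IntegrableOn p (Icc 0 1)) {a b : ℝ}
    (ha : a ∈ Icc (0:ℝ) 1) (hb : b ∈ Icc (0:ℝ) 1) : IntervalIntegrable p volume a b :=
  (hint.mono_set (uIcc_subset_Icc ha hb)).intervalIntegrable

theorem continuousOn_cdf (hint : IntegrableOn p (Icc 0 1)) : ContinuousOn (cdf p) (Icc 0 1) := by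
  rw [← uIcc_of_le zero_le_one] at hint ⊢
  exact intervalIntegral.continuousOn_primitive_interval hint

theorem continuousOn_integratedCdf (hint : IntegrableOn p (Icc 0 1)) :
    ContinuousOn (integratedCdf p) (Icc 0 1) := by
  have hF := (continuousOn_cdf hint).integrableOn_Icc (μ := volume)
  rw [← uIcc_of_le zero_le_one] at hF ⊢
  exact intervalIntegral.continuousOn_primitive_interval hF

theorem intervalIntegrable_cdf (hint : IntegrableOn p (Icc 0 1)) {a b : ℝ}
    (ha : a ∈ Icc (0:ℝ) 1) (hb : b ∈ Icc (0:ℝ) 1) : IntervalIntegrable (cdf p) volume a b :=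
  ((continuousOn_cdf hint).mono (uIcc_subset_Icc ha hb)).intervalIntegrable

theorem hasDerivAt_integratedCdf (hint : IntegrableOn p (Icc 0 1)) {x : ℝ} (hx : x ∈ Ioo 0 1) :
    HasDerivAt (integratedCdf p) (cdf p x) x := by
  have hF := continuousOn_cdf hint
  exact intervalIntegral.integral_hasDerivAt_right
    (intervalIntegrable_cdf hint ⟨le_rfl, zero_le_one⟩ (Ioo_subset_Icc_self hx))
    ((hF.mono Ioo_subset_Icc_self).stronglyMeasurableAtFilter isOpen_Ioo x hx)
    (hF.continuousAt (Icc_mem_nhds hx.1 hx.2))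

theorem cdf_add_integral (hint : IntegrableOn p (Icc 0 1)) {a b : ℝ}
    (ha : a ∈ Icc (0:ℝ) 1) (hb : b ∈ Icc (0:ℝ) 1) : cdf p a + ∫ t in a..b, p t = cdf p b :=
  intervalIntegral.integral_add_adjacent_intervals
    (intervalIntegrable_of_mem_Icc hint ⟨le_rfl, zero_le_one⟩ ha)
    (intervalIntegrable_of_mem_Icc hint ha hb)

theorem integral_add_mul_eq_cdf (hint : IntegrableOn p (Icc 0 1)) (R : ℝ) {T : ℝ}
    (hT : T ∈ Icc (0:ℝ) 1) :
    ∫ t in (0:ℝ)..T, (R + t) * p t = (R + T) * cdf p T - integratedCdf p T := by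
  have hpT := intervalIntegrable_of_mem_Icc hint ⟨le_rfl, zero_le_one⟩ hT
  simp only [integratedCdf, cdf]
  rw [integral_primitive_eq_integral_sub_mul hpT,
    ← intervalIntegral.integral_const_mul,
    ← intervalIntegral.integral_sub (hpT.const_mul _) (hpT.continuousOn_mul (by fun_prop))]
  congr 1 with t
  ring

theorem robustCost_eq (hint : IntegrableOn p (Icc 0 1)) (hnorm : cdf p 1 = 1) (R : ℝ) {T : ℝ}
    (hT : T ∈ Icc (0:ℝ) 1) :
    (∫ t in (0:ℝ)..T, (R + t) * p t) + T * ∫ t in T..1, p t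
      = R * cdf p T + T - integratedCdf p T := by
  have htail : ∫ t in T..1, p t = 1 - cdf p T := by
    linarith [cdf_add_integral hint hT ⟨zero_le_one, le_rfl⟩]
  rw [integral_add_mul_eq_cdf hint R hT, htail]
  ring

theorem cdf_le_one (hp : ∀ t, 0 ≤ p t) (hint : IntegrableOn p (Icc 0 1)) (hnorm : cdf p 1 = 1)
    {s : ℝ} (hs : s ∈ Icc (0:ℝ) 1) : cdf p s ≤ 1 := by
  have htail : 0 ≤ ∫ t in s..1, p t := intervalIntegral.integral_nonneg hs.2 fun t _ ↦ hp t
  linarith [cdf_add_integral hint hs ⟨zero_le_one, le_rfl⟩]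

theorem integratedCdf_one_le (hp : ∀ t, 0 ≤ p t) (hint : IntegrableOn p (Icc 0 1))
    (hnorm : cdf p 1 = 1) {L : ℝ} (hL : L ∈ Icc (0:ℝ) 1) :
    integratedCdf p 1 ≤ integratedCdf p L + (1 - L) := by
  have hsplit := intervalIntegral.integral_add_adjacent_intervals
    (intervalIntegrable_cdf hint ⟨le_rfl, zero_le_one⟩ hL)
    (intervalIntegrable_cdf hint hL ⟨zero_le_one, le_rfl⟩)
  have htail : ∫ s in L..1, cdf p s ≤ ∫ _ in L..1, (1:ℝ) :=
    intervalIntegral.integral_mono_on hL.2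
      (intervalIntegrable_cdf hint hL ⟨zero_le_one, le_rfl⟩)
      (intervalIntegrable_const (c := (1:ℝ)))
      fun s hs ↦ cdf_le_one hp hint hnorm ⟨hL.1.trans hs.1, hs.2⟩
  rw [intervalIntegral.integral_const, smul_eq_mul, mul_one] at htail
  rw [integratedCdf, integratedCdf, ← hsplit]
  linarith

theorem integratedCdf_le_of_robust {R c L : ℝ} (hR : 0 < R) (hint : IntegrableOn p (Icc 0 1))
    (hL0 : 0 ≤ L) (hL1 : L ≤ 1)
    (hrob : ∀ T ∈ Ioc 0 L, R * cdf p T + T - integratedCdf p T ≤ c * T) :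
    integratedCdf p L ≤ (c - 1) * (R * (exp (L / R) - 1) - L) := by
  set h : ℝ → ℝ := fun T ↦ integratedCdf p T - (c - 1) * (R * (exp (T / R) - 1) - T)
  have hcont : ContinuousOn h (Icc 0 L) :=
    ((continuousOn_integratedCdf hint).mono (Icc_subset_Icc le_rfl hL1)).sub (by fun_prop)
  have hderiv : ∀ x ∈ Ioo 0 L, HasDerivAt h (cdf p x - (c - 1) * (exp (x / R) - 1)) x := by
    intro x hx
    have hexp : HasDerivAt (fun T ↦ R * (exp (T / R) - 1) - T) (exp (x / R) - 1) x := by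
      have := (((hasDerivAt_id' x).div_const R).exp.sub_const 1 |>.const_mul R).sub
        (hasDerivAt_id' x)
      exact this.congr_deriv (by field_simp)
    exact (hasDerivAt_integratedCdf hint ⟨hx.1, hx.2.trans_le hL1⟩).sub (hexp.const_mul (c - 1))
  have hle : ∀ x ∈ Ioo 0 L, cdf p x - (c - 1) * (exp (x / R) - 1) ≤ R⁻¹ * h x := by
    intro x hx
    have hgap : R⁻¹ * h x - (cdf p x - (c - 1) * (exp (x / R) - 1))
        = (c * x - (R * cdf p x + x - integratedCdf p x)) / R := by
      simp only [h]
      field_simp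
      ring
    have hslack : 0 ≤ (c * x - (R * cdf p x + x - integratedCdf p x)) / R :=
      div_nonneg (by linarith [hrob x ⟨hx.1, hx.2.le⟩]) hR.le
    linarith
  have hanti := antitoneOn_exp_neg_mul_of_hasDerivAt_le hcont hderiv hle
    ⟨le_rfl, hL0⟩ ⟨hL0, le_rfl⟩ hL0
  have h0 : h 0 = 0 := by simp [h, integratedCdf]
  simp only [h0, mul_zero] at hanti
  have hL := nonpos_of_mul_nonpos_right hanti (exp_pos _)
  simp only [h] at hL
  linarith

end ClearingTimeLP

open ClearingTimeLP

/-- Continuous-time LP underlying Lemma 7 (optimal consistency–robustness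
trade-off): any density `p` on `[0,1]` that is
`(λe^{λ/R})/(e^{λ/R}-1)`-consistent and `c`-robust satisfies
`c ≥ e^{λ/R}/(e^{λ/R} - 1)`. -/
theorem stmt_11 (R : ℝ) (hR : 1 ≤ R)
    (lam : ℝ) (hlam0 : 0 < lam) (hlam1 : lam ≤ 1)
    (p : ℝ → ℝ) (hp : ∀ t, 0 ≤ p t)
    (hint : IntegrableOn p (Set.Icc 0 1))
    (hnorm : (∫ t in (0:ℝ)..1, p t) = 1)
    (hcons : (∫ t in (0:ℝ)..1, (R + t) * p t)
      ≤ lam * Real.exp (lam / R) / (Real.exp (lam / R) - 1))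
    (c : ℝ)
    (hc : ∀ T : ℝ, 0 < T → T ≤ 1 →
      (∫ t in (0:ℝ)..T, (R + t) * p t) + T * (∫ t in T..(1:ℝ), p t) ≤ c * T) :
    c ≥ Real.exp (lam / R) / (Real.exp (lam / R) - 1) := by
  have hR0 : 0 < R := by linarith
  have hrob : ∀ T ∈ Ioc 0 lam, R * cdf p T + T - integratedCdf p T ≤ c * T := fun T hT ↦
    robustCost_eq hint hnorm R ⟨hT.1.le, hT.2.trans hlam1⟩ ▸ hc T hT.1 (hT.2.trans hlam1)
  have hGlam := integratedCdf_le_of_robust hR0 hint hlam0.le hlam1 hrob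
  have hG1 := integratedCdf_one_le hp hint hnorm ⟨hlam0.le, hlam1⟩
  rw [integral_add_mul_eq_cdf hint R ⟨zero_le_one, le_rfl⟩, cdf, hnorm] at hcons
  set E := exp (lam / R)
  have hE : lam < R * (E - 1) := by
    have hx := add_one_lt_exp (div_pos hlam0 hR0).ne'
    calc lam = R * (lam / R) := by field_simp
      _ < R * (E - 1) := by gcongr; linarith
  have hE1 : 0 < E - 1 := pos_of_mul_pos_right (hlam0.trans hE) hR0.le
  have hK : 0 < R * (E - 1) - lam := sub_pos.mpr hE
  have key : (R * (E - 1) - lam) * (1 / (E - 1)) ≤ (R * (E - 1) - lam) * (c - 1) := by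
    have : (R * (E - 1) - lam) * (1 / (E - 1)) = R + lam - lam * E / (E - 1) := by
      field_simp
      ring
    linarith
  calc E / (E - 1) = 1 + 1 / (E - 1) := by field_simp; ring
    _ ≤ c := by linarith [le_of_mul_le_mul_left key hK]
end

section
/- Let C_m and C_M be real numbers with 0 < C_m ≤ C_M, let λ be real with 0 < λ ≤ 1, and set θ_s = (1 + 1/C_M)^{C_m/λ} − 1 and θ_f = (1 + 1/C_M)^{C_m·λ} − 1 (real exponentiation). Then for all real numbers N_s ≥ 0 and N_f ≥ 0 with N_s·λ + N_f ≤ C_m + 1, it holds that N_s·(1 + 1/θ_s) + N_f·(1 + 1/θ_f) ≤ (C_m + 1)·(1 + 1/θ_f). -/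
/-!
Write `s = C_m log (1 + 1/C_M)`, so that `0 < s ≤ 1`, `θ_s = e^{s/λ} - 1` and `θ_f = e^{sλ} - 1`.
Since `1 + 1/(e^u - 1) = 1/(1 - e^{-u})`, the bound is linear in `(N_s, N_f)` once we know
`1 + 1/θ_s ≤ λ (1 + 1/θ_f)`, i.e. `1 - e^{-sλ} ≤ λ (1 - e^{-s/λ})`. As a function of
`x = e^{-sλ}` the difference `x - λ x^{1/λ²}` is concave, so it suffices to check `s = 0` (trivial)
and `s = 1`, which follows from `1 - λ + λ²/e ≤ e^{-λ}` and `λ e^{-1/λ} ≤ λ²/e`.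
-/

open Real Set

lemma exp_one_mul_le_exp (y : ℝ) : exp 1 * y ≤ exp y := by
  have h := add_one_le_exp (y - 1)
  rw [exp_sub, le_div_iff₀ (exp_pos 1)] at h
  linarith

lemma one_sub_add_sq_div_two_sub_cube_div_six_le_exp_neg {x : ℝ} (h0 : 0 ≤ x) (h1 : x ≤ 1) :
    1 - x + x ^ 2 / 2 - x ^ 3 / 6 ≤ exp (-x) := by
  have hbound := Real.exp_bound (x := -x) (by rwa [abs_neg, abs_of_nonneg h0]) (n := 5) (by norm_num)
  simp only [Finset.sum_range_succ, Finset.sum_range_zero, abs_neg, abs_of_nonneg h0,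
    Nat.factorial] at hbound
  have hx4 : x ^ 5 ≤ x ^ 4 := pow_le_pow_of_le_one h0 h1 (by norm_num)
  norm_num at hbound
  linarith [(abs_le.mp hbound).1, pow_nonneg h0 4]

/- Equality holds at both `x = 0` and `x = 1`: near `0` the cubic Taylor bound suffices, near `1`
the tangent line `2 - x ≤ e^{1-x}` does, and the threshold `3/4` lies between `e - 2` and `3 - 6/e`. -/
lemma one_sub_add_sq_div_exp_one_le_exp_neg {x : ℝ} (h0 : 0 ≤ x) (h1 : x ≤ 1) :
    1 - x + x ^ 2 / exp 1 ≤ exp (-x) := by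
  have he : 2.7182818283 < exp 1 := exp_one_gt_d9
  have he' : exp 1 < 2.7182818286 := exp_one_lt_d9
  rcases le_total x (3 / 4) with hx | hx
  · have hsq : x ^ 2 / exp 1 ≤ x ^ 2 * (3 / 8) := by
      rw [div_le_iff₀ (exp_pos 1)]; nlinarith [sq_nonneg x]
    nlinarith [one_sub_add_sq_div_two_sub_cube_div_six_le_exp_neg h0 h1, sq_nonneg x]
  · have h : 2 - x ≤ exp 1 * exp (-x) := by
      rw [← exp_add]; linarith [add_one_le_exp (1 + -x)]
    rw [← div_le_iff₀' (exp_pos 1)] at h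
    have : 1 - x + x ^ 2 / exp 1 ≤ (2 - x) / exp 1 := by
      rw [add_div' _ _ _ (exp_pos 1).ne', div_le_div_iff_of_pos_right (exp_pos 1)]
      nlinarith
    linarith

lemma mul_exp_neg_inv_le_s19 {x : ℝ} (hx : 0 < x) : x * exp (-x⁻¹) ≤ x ^ 2 / exp 1 := by
  rw [exp_neg, ← div_eq_mul_inv, div_le_div_iff₀ (exp_pos _) (exp_pos 1)]
  calc x * exp 1 = x ^ 2 * (exp 1 * x⁻¹) := by field_simp
    _ ≤ x ^ 2 * exp x⁻¹ := by gcongr; exact exp_one_mul_le_exp x⁻¹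

lemma one_sub_le_exp_neg_sub_mul_exp_neg_inv {x : ℝ} (h0 : 0 < x) (h1 : x ≤ 1) :
    1 - x ≤ exp (-x) - x * exp (-x⁻¹) := by
  linarith [one_sub_add_sq_div_exp_one_le_exp_neg h0.le h1, mul_exp_neg_inv_le_s19 h0]

/- `x ↦ x - λ x^{1/λ²}` is concave and takes the value `e^{-sλ} - λ e^{-s/λ}` at `x = e^{-sλ}`,
so the cases `s = 0` and `s = 1` bound it on the whole segment. -/
lemma one_sub_exp_neg_mul_le {s lam : ℝ} (hs0 : 0 ≤ s) (hs1 : s ≤ 1) (h0 : 0 < lam)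
    (h1 : lam ≤ 1) : 1 - exp (-(s * lam)) ≤ lam * (1 - exp (-(s / lam))) := by
  set μ := (lam ^ 2)⁻¹
  have hμ : 1 ≤ μ := one_le_inv₀ (by positivity) |>.mpr (pow_le_one₀ h0.le h1)
  have hconc : ConcaveOn ℝ (Ici 0) fun x : ℝ => x - lam * x ^ μ :=
    (concaveOn_id (convex_Ici 0)).sub ((convexOn_rpow hμ).smul h0.le)
  have hpow (a : ℝ) : exp (-(a * lam)) ^ μ = exp (-(a / lam)) := by
    rw [← exp_mul]; congr 1; simp only [μ]; field_simp
  have hz : exp (-(s * lam)) ∈ segment ℝ (exp (-(1 * lam))) 1 := by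
    rw [segment_eq_Icc (exp_le_one_iff.mpr (by linarith))]
    exact ⟨exp_le_exp.mpr (by nlinarith), exp_le_one_iff.mpr (by nlinarith)⟩
  have hmin := hconc.ge_on_segment (exp_pos _).le (mem_Ici.mpr zero_le_one) hz
  rw [hpow, hpow, one_rpow, one_mul, one_div, mul_one] at hmin
  have := (le_min (one_sub_le_exp_neg_sub_mul_exp_neg_inv h0 h1) le_rfl).trans hmin
  linarith

lemma one_add_one_div_exp_sub_one {u : ℝ} (hu : 0 < u) :
    1 + 1 / (exp u - 1) = (1 - exp (-u))⁻¹ := by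
  have : 0 < exp u - 1 := by linarith [add_one_lt_exp hu.ne']
  rw [exp_neg]
  field_simp
  ring

lemma one_add_one_div_exp_div_sub_one_le {s lam : ℝ} (hs0 : 0 < s) (hs1 : s ≤ 1) (h0 : 0 < lam)
    (h1 : lam ≤ 1) : 1 + 1 / (exp (s / lam) - 1) ≤ lam * (1 + 1 / (exp (s * lam) - 1)) := by
  rw [one_add_one_div_exp_sub_one (by positivity), one_add_one_div_exp_sub_one (by positivity),
    ← div_eq_mul_inv, inv_eq_one_div, div_le_div_iff₀]
  · simpa using one_sub_exp_neg_mul_le hs0.le hs1 h0 h1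
  · simpa using div_pos hs0 h0
  · simpa using mul_pos hs0 h0

lemma mul_log_one_add_one_div_le_one {a b : ℝ} (hb : 0 < b) (hab : a ≤ b) :
    a * log (1 + 1 / b) ≤ 1 := by
  have hlog : 0 < log (1 + 1 / b) := log_pos (by simpa using hb)
  calc a * log (1 + 1 / b) ≤ b * log (1 + 1 / b) := by gcongr
    _ ≤ b * (1 / b) := by gcongr; linarith [log_le_sub_one_of_pos (x := 1 + 1 / b) (by positivity)]
    _ = 1 := by field_simp

/-- Key intermediate bound in the proof of Theorem 3: with
`θ_s = (1 + 1/C_M)^{C_m/λ} - 1` and `θ_f = (1 + 1/C_M)^{C_m·λ} - 1`,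
for all `N_s, N_f ≥ 0` with `N_s·λ + N_f ≤ C_m + 1`,
`N_s·(1 + 1/θ_s) + N_f·(1 + 1/θ_f) ≤ (C_m + 1)·(1 + 1/θ_f)`. -/
theorem stmt_19 (Cm CM lam : ℝ) (hCm : 0 < Cm) (hle : Cm ≤ CM)
    (hlam0 : 0 < lam) (hlam1 : lam ≤ 1)
    (θs θf : ℝ)
    (hθs : θs = (1 + 1 / CM) ^ (Cm / lam) - 1)
    (hθf : θf = (1 + 1 / CM) ^ (Cm * lam) - 1) :
    ∀ Ns Nf : ℝ, 0 ≤ Ns → 0 ≤ Nf → Ns * lam + Nf ≤ Cm + 1 →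
      Ns * (1 + 1 / θs) + Nf * (1 + 1 / θf) ≤ (Cm + 1) * (1 + 1 / θf) := by
  intro Ns Nf hNs hNf hN
  have hCM : 0 < CM := hCm.trans_le hle
  have hθs' : θs = exp (Cm * log (1 + 1 / CM) / lam) - 1 := by
    rw [hθs, rpow_def_of_pos (by positivity)]; ring_nf
  have hθf' : θf = exp (Cm * log (1 + 1 / CM) * lam) - 1 := by
    rw [hθf, rpow_def_of_pos (by positivity)]; ring_nf
  have hs0 : 0 < Cm * log (1 + 1 / CM) := mul_pos hCm (log_pos (by simpa using hCM))
  have hkey := one_add_one_div_exp_div_sub_one_le hs0 (mul_log_one_add_one_div_le_one hCM hle)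
    hlam0 hlam1
  rw [← hθs', ← hθf'] at hkey
  have hB : 0 ≤ 1 + 1 / θf := by
    rw [hθf', one_add_one_div_exp_sub_one (by positivity), inv_nonneg, sub_nonneg,
      exp_le_one_iff, neg_nonpos]
    positivity
  calc Ns * (1 + 1 / θs) + Nf * (1 + 1 / θf)
      ≤ Ns * (lam * (1 + 1 / θf)) + Nf * (1 + 1 / θf) := by gcongr
    _ = (Ns * lam + Nf) * (1 + 1 / θf) := by ring
    _ ≤ (Cm + 1) * (1 + 1 / θf) := by gcongr
end
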